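/- Let θ > 0, B ≥ 0, and let z, μ ∈ ℝ^d with ‖μ‖₂ ≤ B, z ≠ 0 and z ≠ μ. Define h = [min(‖z−μ‖₂², 1/θ)/‖z−μ‖₂²]·[‖z‖₂²/min(‖z‖₂², 1/θ)]. Then 1 − 2B·√θ − B²·θ ≤ h ≤ 1 + 2B·√θ + B²·θ. -/

import Mathlib

open MeasureTheory ProbabilityTheory Matrix Real
open scoped InnerProductSpace

noncomputable section

/-- Vectors in `ℝ^d` with the Euclidean norm. -/
abbrev Vec (d : ℕ) := EuclideanSpace ℝ (Fin d)

/-- Real `d × d` matrices. -/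
abbrev Mat (d : ℕ) := Matrix (Fin d) (Fin d) ℝ

variable {d : ℕ}

/-- Operator (spectral) norm of a square matrix. -/
noncomputable def opNorm (A : Mat d) : ℝ := ‖Matrix.toEuclideanCLM (𝕜 := ℝ) A‖

/-- Frobenius (Hilbert–Schmidt) norm. -/
noncomputable def frobNorm (A : Mat d) : ℝ := Real.sqrt (∑ i, ∑ j, (A i j) ^ 2)

/-- Nuclear norm `‖A‖₁ = tr √(AᵀA)`. -/
noncomputable def nuclearNorm (A : Mat d) : ℝ :=
  ((Matrix.posSemidef_conjTranspose_mul_self A).1.eigenvectorUnitary.1 *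
    Matrix.diagonal (Real.sqrt ∘ (Matrix.posSemidef_conjTranspose_mul_self A).1.eigenvalues) *
    (star (Matrix.posSemidef_conjTranspose_mul_self A).1.eigenvectorUnitary : Mat d)).trace

/-- Outer product `v vᵀ`. -/
def outer (v : Vec d) : Mat d := Matrix.of fun i j => v i * v j

/-- Entrywise expectation of a random matrix. -/
noncomputable def matExp {Ω : Type*} [MeasurableSpace Ω] (P : Measure Ω) (F : Ω → Mat d) : Mat d :=
  Matrix.of fun i j => ∫ ω, F ω i j ∂P

/-- The truncation function `ψ(x) = sign(x) · min(|x|, 1)`. -/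
noncomputable def psi (x : ℝ) : ℝ := Real.sign x * min |x| 1

/-- Mean vector `μ₀ = 𝔼 X`. -/
noncomputable def meanVec {Ω : Type*} [MeasurableSpace Ω] (P : Measure Ω) (X : Ω → Vec d) : Vec d :=
  ∫ ω, X ω ∂P

/-- Covariance matrix `Σ₀ = 𝔼[(X−μ₀)(X−μ₀)ᵀ]`. -/
noncomputable def covMat {Ω : Type*} [MeasurableSpace Ω] (P : Measure Ω) (X : Ω → Vec d) : Mat d :=
  matExp P (fun ω => outer (X ω - meanVec P X))

/-- `σ₀ = ‖𝔼[‖X−μ₀‖₂² (X−μ₀)(X−μ₀)ᵀ]‖^{1/2}`. -/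
noncomputable def sigma0 {Ω : Type*} [MeasurableSpace Ω] (P : Measure Ω) (X : Ω → Vec d) : ℝ :=
  Real.sqrt (opNorm (matExp P
    (fun ω => ‖X ω - meanVec P X‖ ^ 2 • outer (X ω - meanVec P X))))

/-- Intrinsic dimension `d̄ = σ₀²/‖Σ₀‖²`. -/
noncomputable def dbar {Ω : Type*} [MeasurableSpace Ω] (P : Measure Ω) (X : Ω → Vec d) : ℝ :=
  (sigma0 P X) ^ 2 / (opNorm (covMat P X)) ^ 2

/-- The truncated covariance estimator
`Σ̂(θ) = (mθ)⁻¹ ∑ᵢ ψ(θ‖Xᵢ−μ̂‖₂²) (Xᵢ−μ̂)(Xᵢ−μ̂)ᵀ/‖Xᵢ−μ̂‖₂²`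
(a summand being `0` when `Xᵢ = μ̂`, by the `0/0 = 0` convention). -/
noncomputable def truncCov {Ω : Type*} (m : ℕ) (X : Fin m → Ω → Vec d)
    (muhat : Ω → Vec d) (θ : ℝ) (ω : Ω) : Mat d :=
  (1 / (m * θ)) •
    ∑ i, (psi (θ * ‖X i ω - muhat ω‖ ^ 2) / ‖X i ω - muhat ω‖ ^ 2) • outer (X i ω - muhat ω)

/-- `μ̂` is a geometric median of the group means of the groups `G j` of the sample `X`:
it minimizes `z ↦ ∑ⱼ ‖z − μ̂ⱼ‖₂` where `μ̂ⱼ = |G j|⁻¹ ∑_{i ∈ G j} Xᵢ`. -/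
def IsMedianOfMeans {Ω : Type*} {m k : ℕ} (X : Fin m → Ω → Vec d)
    (G : Fin k → Finset (Fin m)) (muhat : Ω → Vec d) : Prop :=
  ∀ ω, ∀ z : Vec d,
    ∑ j, ‖muhat ω - ((G j).card : ℝ)⁻¹ • ∑ i ∈ G j, X i ω‖ ≤
      ∑ j, ‖z - ((G j).card : ℝ)⁻¹ • ∑ i ∈ G j, X i ω‖

/-- `θ_j = (1/σ_j)·√(β/m)` with `σ_j = σ_min 2^j`. -/
noncomputable def lepskiTheta (σmin β : ℝ) (m : ℕ) (j : ℤ) : ℝ :=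
  (1 / (σmin * 2 ^ j)) * Real.sqrt (β / m)

/-- The index set `𝒥 = {j ∈ ℤ : σ_min ≤ σ_min 2^j < 2 σ_max}`. -/
def lepskiJ (σmin σmax : ℝ) : Set ℤ :=
  {j : ℤ | σmin ≤ σmin * 2 ^ j ∧ σmin * 2 ^ j < 2 * σmax}

/-- `Σ̂_{m,j} = Σ̂(θ_j)`. -/
noncomputable def lepskiSig {Ω : Type*} (m : ℕ) (X : Fin m → Ω → Vec d) (muhat : Ω → Vec d)
    (σmin β : ℝ) (j : ℤ) (ω : Ω) : Mat d :=
  truncCov m X muhat (lepskiTheta σmin β m j) ω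

/-- `jstar ω` is the minimal `j ∈ 𝒥` such that for all `l ∈ 𝒥` with `l > j`,
`‖Σ̂_{m,l} − Σ̂_{m,j}‖ ≤ 6 σ_l √(β/m)`. -/
def IsLepskiIndex {Ω : Type*} {m : ℕ} (X : Fin m → Ω → Vec d) (muhat : Ω → Vec d)
    (σmin σmax β : ℝ) (jstar : Ω → ℤ) : Prop :=
  ∀ ω, jstar ω ∈ lepskiJ σmin σmax ∧
    (∀ l ∈ lepskiJ σmin σmax, jstar ω < l →
      opNorm (lepskiSig m X muhat σmin β l ω - lepskiSig m X muhat σmin β (jstar ω) ω) ≤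
        6 * (σmin * 2 ^ l) * Real.sqrt (β / m)) ∧
    (∀ j ∈ lepskiJ σmin σmax,
      (∀ l ∈ lepskiJ σmin σmax, j < l →
        opNorm (lepskiSig m X muhat σmin β l ω - lepskiSig m X muhat σmin β j ω) ≤
          6 * (σmin * 2 ^ l) * Real.sqrt (β / m)) →
      jstar ω ≤ j)

/-- Orthogonal projector onto the span of the (orthonormal eigen-)vectors `u 0, …, u (k-1)`. -/
noncomputable def projTop (k : ℕ) (u : Fin d → Fin d → ℝ) : Mat d :=
  ∑ i : Fin d, if (i : ℕ) < k then Matrix.of (fun a b => u i a * u i b) else (0 : Mat d)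

/-- Quadratic form `vᵀ M v`. -/
def quadForm (M : Mat d) (v : Vec d) : ℝ := ∑ i, ∑ j, v i * M i j * v j

/-- Matrix function `f(A) = U f(Λ) Uᵀ` defined through the spectral decomposition of a
Hermitian (real symmetric) matrix. -/
noncomputable def matApply (f : ℝ → ℝ) {A : Mat d} (hA : A.IsHermitian) : Mat d :=
  (hA.eigenvectorUnitary : Mat d) * Matrix.diagonal (f ∘ hA.eigenvalues) *
    star (hA.eigenvectorUnitary : Mat d)


/-!
With `T(t) = max(√θ t, 1)`, the truncation factor is `min(t², 1/θ)/t² = T(t)⁻²`, so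
`h = (T‖z‖ / T‖z−μ‖)²`. Since `T ≥ 1` and `T` is `√θ`-Lipschitz, `T‖z‖` and `T‖z−μ‖` differ by
at most `x = B√θ` and hence each is at most `(1 + x)` times the other. Then `(1 + x)²` bounds the
square of their ratio from above, and `1/(1+x)² ≥ 2 − (1+x)² = 1 − 2x − x²` from below.
-/

lemma min_sq_div_sq_eq {θ t : ℝ} (hθ : 0 < θ) (ht : 0 < t) :
    min (t ^ 2) (1 / θ) / t ^ 2 = (max (√θ * t) 1 ^ 2)⁻¹ := by
  have hsq : (√θ * t) ^ 2 = θ * t ^ 2 := by rw [mul_pow, sq_sqrt hθ.le]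
  rcases le_total (√θ * t) 1 with hle | hle
  · have : t ^ 2 ≤ 1 / θ := by
      rw [le_div_iff₀ hθ]; nlinarith [pow_le_one₀ (by positivity) hle (n := 2)]
    rw [min_eq_left this, max_eq_right hle, div_self (by positivity)]
    norm_num
  · have : 1 / θ ≤ t ^ 2 := by
      rw [div_le_iff₀ hθ]; nlinarith [one_le_pow₀ hle (n := 2)]
    rw [min_eq_right this, max_eq_left hle, hsq]
    field_simp

lemma abs_max_sqrt_mul_norm_sub_le {E : Type*} [SeminormedAddCommGroup E] {θ : ℝ} (z μ : E) :
    |max (√θ * ‖z‖) 1 - max (√θ * ‖z - μ‖) 1| ≤ √θ * ‖μ‖ :=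
  calc |max (√θ * ‖z‖) 1 - max (√θ * ‖z - μ‖) 1|
      ≤ |√θ * ‖z‖ - √θ * ‖z - μ‖| := abs_max_sub_max_le_abs _ _ _
    _ = √θ * |‖z‖ - ‖z - μ‖| := by rw [← mul_sub, abs_mul, abs_of_nonneg (sqrt_nonneg θ)]
    _ ≤ √θ * ‖z - (z - μ)‖ := by gcongr; exact abs_norm_sub_norm_le _ _
    _ = √θ * ‖μ‖ := by rw [sub_sub_cancel]

lemma le_one_add_mul_of_sub_le {a b x : ℝ} (hb : 1 ≤ b) (hx : 0 ≤ x) (h : a - b ≤ x) :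
    a ≤ (1 + x) * b := by
  nlinarith

lemma sq_div_le_one_add_sq {a b x : ℝ} (hb : 0 < b) (ha : 0 ≤ a) (hab : a ≤ (1 + x) * b) :
    (a / b) ^ 2 ≤ 1 + 2 * x + x ^ 2 := by
  have : a / b ≤ 1 + x := (div_le_iff₀ hb).2 hab
  nlinarith [div_nonneg ha hb.le]

lemma one_sub_le_sq_div {a b x : ℝ} (ha : 0 < a) (hb : 0 < b) (hba : b ≤ (1 + x) * a) :
    1 - 2 * x - x ^ 2 ≤ (a / b) ^ 2 := by
  set y := (b / a) ^ 2
  have hy : 0 < y := by positivity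
  have hy_le : y ≤ (1 + x) ^ 2 := sq_div_le_one_add_sq ha hb.le hba |>.trans_eq (by ring)
  have h_two_sub_le : 2 - y ≤ 1 / y := by
    rw [le_div_iff₀ hy]; nlinarith [sq_nonneg (y - 1)]
  calc 1 - 2 * x - x ^ 2 = 2 - (1 + x) ^ 2 := by ring
    _ ≤ 2 - y := by linarith
    _ ≤ 1 / y := h_two_sub_le
    _ = (a / b) ^ 2 := by rw [one_div, ← inv_pow, inv_div]

theorem stmt12_general {d : ℕ} (θ B : ℝ) (z μ : Vec d)
    (hθ : 0 < θ) (hμ : ‖μ‖ ≤ B) (hz : z ≠ 0) (hzμ : z ≠ μ) :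
    1 - 2 * B * Real.sqrt θ - B ^ 2 * θ ≤
        (min (‖z - μ‖ ^ 2) (1 / θ) / ‖z - μ‖ ^ 2) * (‖z‖ ^ 2 / min (‖z‖ ^ 2) (1 / θ)) ∧
      (min (‖z - μ‖ ^ 2) (1 / θ) / ‖z - μ‖ ^ 2) * (‖z‖ ^ 2 / min (‖z‖ ^ 2) (1 / θ)) ≤
        1 + 2 * B * Real.sqrt θ + B ^ 2 * θ := by
  set a := max (√θ * ‖z‖) 1
  set b := max (√θ * ‖z - μ‖) 1
  have ha : 1 ≤ a := le_max_right _ _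
  have hb : 1 ≤ b := le_max_right _ _
  have h_eq : (min (‖z - μ‖ ^ 2) (1 / θ) / ‖z - μ‖ ^ 2) * (‖z‖ ^ 2 / min (‖z‖ ^ 2) (1 / θ))
      = (a / b) ^ 2 := by
    rw [← inv_div (min (‖z‖ ^ 2) (1 / θ)),
      min_sq_div_sq_eq hθ (norm_pos_iff.2 (sub_ne_zero.2 hzμ)),
      min_sq_div_sq_eq hθ (norm_pos_iff.2 hz), inv_inv, div_pow, div_eq_inv_mul]
  have hx : 0 ≤ B * √θ := mul_nonneg ((norm_nonneg μ).trans hμ) (sqrt_nonneg θ)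
  have h_close : |a - b| ≤ B * √θ :=
    (abs_max_sqrt_mul_norm_sub_le z μ).trans (by rw [mul_comm B]; gcongr)
  have h_sq : (B * √θ) ^ 2 = B ^ 2 * θ := by rw [mul_pow, sq_sqrt hθ.le]
  rw [h_eq, ← h_sq, mul_assoc 2]
  exact ⟨one_sub_le_sq_div (by positivity) (by positivity)
      (le_one_add_mul_of_sub_le ha hx (abs_sub_le_iff.1 h_close).2),
    sq_div_le_one_add_sq (by positivity) (by positivity)
      (le_one_add_mul_of_sub_le hb hx (abs_sub_le_iff.1 h_close).1)⟩

/-- deterministic bounds on the ratio of truncation factors. -/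
theorem stmt12 {d : ℕ} (θ B : ℝ) (z μ : Vec d)
    (hθ : 0 < θ) (hB : 0 ≤ B) (hμ : ‖μ‖ ≤ B) (hz : z ≠ 0) (hzμ : z ≠ μ) :
    1 - 2 * B * Real.sqrt θ - B ^ 2 * θ ≤
        (min (‖z - μ‖ ^ 2) (1 / θ) / ‖z - μ‖ ^ 2) * (‖z‖ ^ 2 / min (‖z‖ ^ 2) (1 / θ)) ∧
      (min (‖z - μ‖ ^ 2) (1 / θ) / ‖z - μ‖ ^ 2) * (‖z‖ ^ 2 / min (‖z‖ ^ 2) (1 / θ)) ≤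
        1 + 2 * B * Real.sqrt θ + B ^ 2 * θ :=
  stmt12_general θ B z μ hθ hμ hz hzμ
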